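/- arXiv:2110.01508 — 4 statements merged into one kernel-verified Lean document; each statement's English description precedes it below -/
import Mathlib

section
/- Every proper nonempty saturated primitive coideal of the zigzag graph Z is of the form Z(t) for some template t, and this template t is uniquely determined by the coideal. -/
/-!
Common definitions: the zigzag graph on binary words, templates and their coideals,
zigzag flanges and sections, the functions `F_λ(u)` and `φ_{t,w}`, and harmonic /
semifinite / indecomposable functions on subgraphs of the zigzag graph.
-/

open scoped ENNReal NNReal

namespace Zigzag

/-- Binary words: `true` is `+`, `false` is `−`. -/
abbrev BW := List Bool

/-- `CoveredBy a b`: `b` covers `a` in the subword order, i.e. `|b| = |a| + 1` and `a`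
is a subword of `b`; these are the edges of the zigzag graph. -/
def CoveredBy (a b : BW) : Prop := a.Sublist b ∧ b.length = a.length + 1

/-- The set of upper neighbours of `a` lying in `S` is finite. -/
lemma upSet_finite (S : Set BW) (a : BW) : {b | b ∈ S ∧ CoveredBy a b}.Finite :=
  (List.finite_length_eq Bool (a.length + 1)).subset (fun _ hb => hb.2.2)

/-- The finset of upper neighbours of `a` inside `S`. -/
noncomputable def upFinset (S : Set BW) (a : BW) : Finset BW :=
  (upSet_finite S a).toFinset

/-- A `[0,∞]`-valued function is harmonic on `S ⊆ Z` (with the edges induced from the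
zigzag graph) if its value at any vertex of `S` equals the sum of its values at the
upper neighbours lying in `S`. -/
def HarmonicOn (S : Set BW) (φ : BW → ℝ≥0∞) : Prop :=
  ∀ a ∈ S, φ a = ∑ b ∈ upFinset S a, φ b

/-- A template: a nonempty sequence of clusters with alternating signs, each cluster
being a sign (`true` = `+`, `false` = `−`) with a multiplicity in `{1,2,…} ∪ {∞}`,
containing at least one infinite cluster. -/
structure Template where
  clusters : List (Bool × ℕ∞)
  ne : clusters ≠ []
  pos : ∀ c ∈ clusters, c.2 ≠ 0
  alternating : clusters.Chain' fun c d => c.1 ≠ d.1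
  hasInf : ∃ c ∈ clusters, c.2 = ⊤

/-- The binary word obtained from a list of clusters by replacing every infinite
multiplicity by `N` (and keeping the finite multiplicities). -/
def clWord (cs : List (Bool × ℕ∞)) (N : ℕ) : BW :=
  (cs.map fun c => List.replicate (if c.2 = ⊤ then N else c.2.toNat) c.1).flatten

/-- The coideal generated by a list of clusters: all binary words that are subwords of
some instantiation. -/
def Zcl (cs : List (Bool × ℕ∞)) : Set BW := {a | ∃ N, a.Sublist (clWord cs N)}

/-- The coideal `Z(t)` of the zigzag graph attached to a template `t`. -/
def Zt (t : Template) : Set BW := Zcl t.clusters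

/-- The cluster in position `i` of `t` is a separating cluster: a one-symbol finite
cluster which is not outermost and whose two neighbours are infinite clusters
(necessarily of the same sign). -/
def Template.isSep (t : Template) (i : ℕ) : Prop :=
  0 < i ∧ i + 1 < t.clusters.length ∧
  (t.clusters.getD i (true, 1)).2 = 1 ∧
  (t.clusters.getD (i - 1) (true, 1)).2 = ⊤ ∧
  (t.clusters.getD (i + 1) (true, 1)).2 = ⊤

/-- A template is finite if all its finite clusters are separating; otherwise it is
semifinite. -/
def Template.IsFiniteTemplate (t : Template) : Prop :=
  ∀ i < t.clusters.length, (t.clusters.getD i (true, 1)).2 ≠ ⊤ → t.isSep i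

/-- The number of infinite clusters of a template. -/
def Template.numInf (t : Template) : ℕ :=
  (t.clusters.filter fun c => decide (c.2 = ⊤)).length

/-- Position `p` of `t` carries a finite non-separating cluster, i.e. a cluster
contributing to the zigzag flange of `t`. -/
def IsFlangePos (t : Template) (p : ℕ) : Prop :=
  p < t.clusters.length ∧ (t.clusters.getD p (true, 1)).2 ≠ ⊤ ∧ ¬t.isSep p

/-- Decrease by one the multiplicity of the cluster in position `p`. -/
def decAt (cs : List (Bool × ℕ∞)) (p : ℕ) : List (Bool × ℕ∞) :=
  cs.set p ((cs.getD p (true, 1)).1, (cs.getD p (true, 1)).2 - 1)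

/-- The coideal `J(t)`: the union of the coideals `Z(r)` over all `r` obtained from `t`
by removing a single symbol from a cluster corresponding to a block of a binary word
from the zigzag flange of `t` (no merging of clusters is needed to generate `Z(r)`). -/
def Jt (t : Template) : Set BW :=
  {a | ∃ p, IsFlangePos t p ∧ a ∈ Zcl (decAt t.clusters p)}

/-- The canonical splitting of a template `t` into its zigzag flange
`fl(t) = (a₀, …, a_k)` (given by the lists `A 0, …, A k` of clusters, each consisting
of finite non-separating clusters of `t`) and its sections `t₁, …, t_k` (the maximal
groups of consecutive clusters forming finite templates), so that
`t = (a₀, t₁, a₁, …, a_{k−1}, t_k, a_k)`.  The two `interior` conditions express the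
maximality of the decomposition. -/
structure SectionData (t : Template) where
  k : ℕ
  A : Fin (k + 1) → List (Bool × ℕ∞)
  T : Fin k → Template
  concat : t.clusters
      = A 0 ++ (List.ofFn fun i : Fin k => (T i).clusters ++ A i.succ).flatten
  finA : ∀ j, ∀ c ∈ A j, c.2 ≠ ⊤
  secFin : ∀ i, (T i).IsFiniteTemplate
  interior_ne : ∀ j : Fin (k + 1), (j : ℕ) ≠ 0 → (j : ℕ) ≠ k → A j ≠ []
  interior_not_sep : ∀ j : Fin (k + 1), (j : ℕ) ≠ 0 → (j : ℕ) ≠ k →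
      ∀ s : Bool, A j ≠ [(s, 1)]

/-- The binary word corresponding to a list of finite clusters (a flange word). -/
def flangeWord (cs : List (Bool × ℕ∞)) : BW :=
  (cs.map fun c => List.replicate c.2.toNat c.1).flatten

/-- `a₀ ⊔ ℓ 1 ⊔ a₁ ⊔ … ⊔ ℓ k ⊔ a_k` (empty flange words disappear). -/
def assemble {t : Template} (D : SectionData t) (ℓ : Fin D.k → BW) : BW :=
  flangeWord (D.A 0) ++ (List.ofFn fun i : Fin D.k => ℓ i ++ flangeWord (D.A i.succ)).flatten

/-- `ℓ` is a decomposition of `a` along the sections of `t`: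
`bw(a) = a₀ ⊔ bw(ℓ 1) ⊔ a₁ ⊔ … ⊔ bw(ℓ k) ⊔ a_k` with `ℓ i ∈ Z(tᵢ)`. -/
def decompOf {t : Template} (D : SectionData t) (a : BW) (ℓ : Fin D.k → BW) : Prop :=
  (∀ i, ℓ i ∈ Zt (D.T i)) ∧ a = assemble D ℓ

/-- The signs of the infinite clusters of a list of clusters, in order. -/
def infSigns (cs : List (Bool × ℕ∞)) : List Bool :=
  (cs.filter fun c => decide (c.2 = ⊤)).map Prod.fst

/-- The number of weights consumed by the sections preceding the `i`-th one. -/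
def secOffset {t : Template} (D : SectionData t) (i : Fin D.k) : ℕ :=
  ∑ i' ∈ Finset.univ.filter (· < i), (infSigns (D.T i').clusters).length

/-- The part `vᵢ` of the tuple of weights `w` corresponding to the infinite clusters of
the `i`-th section, as a sequence of (sign, weight) pairs. -/
def vD {t : Template} (D : SectionData t) (w : List ℝ) (i : Fin D.k) : List (Bool × ℝ) :=
  (infSigns (D.T i).clusters).zip (w.drop (secOffset D i))

/-- `F_λ(u)` for a finite sequence `u` of (sign, length) pairs and a zigzag `λ`
(encoded by its binary word `a`, so that `λ` has `a.length + 1` boxes): the sum, over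
all decompositions of `λ` into `u.length` consecutive (possibly empty) zigzags
`λ(1), …, λ(m)` with `λ(i)` a row when the `i`-th sign is `+` and a column when it is
`−`, of `u₁ ^ |λ(1)| ⋯ u_m ^ |λ(m)|`.  A decomposition is recorded by the tuple `c` of
the numbers of boxes of the pieces; the row/column constraint says that the letters of
`a` strictly inside the `i`-th group of boxes all equal the `i`-th sign. -/
noncomputable def Fword (u : List (Bool × ℝ)) (a : BW) : ℝ :=
  ∑ c ∈ (Finset.Nat.antidiagonalTuple u.length (a.length + 1)).filter
      (fun c => ∀ i : Fin u.length,
        (a.drop (∑ i' ∈ Finset.univ.filter (· < i), c i')).take (c i - 1)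
          = List.replicate (c i - 1) (u.get i).1),
    ∏ i, (u.get i).2 ^ c i

open Classical in
/-- The function `φ_{t,w}` attached to a semifinite zigzag growth model `(t, w)`:
it equals `+∞` on `J(t)`, and on `Z(t) ∖ J(t)` it equals
`F_{λ^{(1)}}(v₁) ⋯ F_{λ^{(k)}}(v_k)`, where `(λ^{(1)}, …, λ^{(k)})` is the (unique)
decomposition of `λ` along the sections of `t` (it is `0` off `Z(t)`). -/
noncomputable def phiTW (t : Template) (D : SectionData t) (w : List ℝ) (a : BW) : ℝ≥0∞ :=
  if a ∉ Zt t then 0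
  else if a ∈ Jt t then ⊤
  else if h : ∃ ℓ : Fin D.k → BW, decompOf D a ℓ then
    ENNReal.ofReal (∏ i, Fword (vD D w i) (h.choose i))
  else 0

section Kcone

/-- The relation `λ = ∑_{μ : λ ↗ μ} μ` (within `S`) as an element of the free module. -/
noncomputable def relOf (S : Set BW) (a : BW) : BW →₀ ℝ :=
  Finsupp.single a 1 - ∑ b ∈ upFinset S a, Finsupp.single b 1

/-- The submodule of relations defining `K(S)`. -/
noncomputable def Krel (S : Set BW) : Submodule ℝ (BW →₀ ℝ) :=
  Submodule.span ℝ {f | ∃ a ∈ S, f = relOf S a}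

/-- The class of `f` in `K(S) = (⊕_{λ ∈ S} ℝ λ) ⧸ (relations)`. -/
noncomputable def kmk (S : Set BW) (f : BW →₀ ℝ) : (BW →₀ ℝ) ⧸ Krel S :=
  Submodule.Quotient.mk f

/-- Nonnegative formal combinations of vertices of `S`. -/
def NonnegOn (S : Set BW) (f : BW →₀ ℝ) : Prop :=
  (∀ x, 0 ≤ f x) ∧ ∀ x ∈ f.support, x ∈ S

/-- The cone `K⁺(S)` spanned by the vertices of `S` in `K(S)`. -/
noncomputable def Kpos (S : Set BW) : Set ((BW →₀ ℝ) ⧸ Krel S) :=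
  kmk S '' {f | NonnegOn S f}

/-- The order defined by the cone `K⁺(S)`: `x ≤_K y` iff `y − x ∈ K⁺(S)`. -/
def leK (S : Set BW) (x y : (BW →₀ ℝ) ⧸ Krel S) : Prop := y - x ∈ Kpos S

/-- The value of (the canonical extension of) `φ` at a nonnegative combination of
vertices. -/
noncomputable def phiHat (φ : BW → ℝ≥0∞) (f : BW →₀ ℝ) : ℝ≥0∞ :=
  ∑ x ∈ f.support, ENNReal.ofReal (f x) * φ x

/-- `φ` is finite on `S`. -/
def FiniteOn (S : Set BW) (φ : BW → ℝ≥0∞) : Prop := ∀ a ∈ S, φ a ≠ ⊤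

/-- `φ` is a semifinite function on (the graph) `S`: it is not everywhere finite, and
its value at any element `a` of the cone `K⁺` is the supremum of its values at the
elements `b ≤_K a` of the cone where it is finite. -/
def SemifiniteOn (S : Set BW) (φ : BW → ℝ≥0∞) : Prop :=
  (∃ a ∈ S, φ a = ⊤) ∧
  ∀ f : BW →₀ ℝ, NonnegOn S f →
    phiHat φ f =
      ⨆ g ∈ {g : BW →₀ ℝ |
        NonnegOn S g ∧ leK S (kmk S g) (kmk S f) ∧ phiHat φ g ≠ ⊤}, phiHat φ g

/-- A semifinite harmonic function `φ` on `S` is indecomposable if any finite or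
semifinite harmonic function `φ′ ≤ φ` on `S` which does not vanish identically on the
finiteness ideal of `φ` is a constant multiple of `φ` on that ideal. -/
def IndecSemifiniteOn (S : Set BW) (φ : BW → ℝ≥0∞) : Prop :=
  ∀ φ' : BW → ℝ≥0∞, HarmonicOn S φ' →
    (FiniteOn S φ' ∨ SemifiniteOn S φ') →
    (∀ a ∈ S, φ' a ≤ φ a) →
    (∃ a ∈ S, φ a ≠ ⊤ ∧ φ' a ≠ 0) →
    ∃ c : ℝ≥0, ∀ a ∈ S, φ a ≠ ⊤ → φ' a = (c : ℝ≥0∞) * φ a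

end Kcone

end Zigzag

namespace Zigzag

/-- A coideal of the zigzag graph: closed under passing to subwords. -/
def IsCoidealBW (J : Set BW) : Prop := ∀ a ∈ J, ∀ b : BW, b.Sublist a → b ∈ J

/-- A saturated coideal of the zigzag graph: every element has an upper neighbour in
the coideal. -/
def IsSatCoidealBW (J : Set BW) : Prop :=
  IsCoidealBW J ∧ ∀ a ∈ J, ∃ b ∈ J, CoveredBy a b

/-- A primitive saturated coideal: not a union of two strictly smaller saturated
coideals. -/
def IsPrimCoidealBW (J : Set BW) : Prop :=
  IsSatCoidealBW J ∧ ∀ J₁ J₂ : Set BW, IsSatCoidealBW J₁ → IsSatCoidealBW J₂ →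
    J = J₁ ∪ J₂ → J = J₁ ∨ J = J₂

/-!
Let `J` be a proper nonempty saturated primitive coideal. A word outside `J` is not a subword
of any long alternating word, so the words of `J` have boundedly many blocks; and by Higman's
lemma the complement of `J` is generated by finitely many words, all shorter than some `L`.
Saturation puts every `a ∈ J` below words of `J` of any length. Such a long word `b` has a
block of length at least `L`; turning every block of length at least `L` into an infinite
cluster gives a template `t` with `a ∈ Z(t)`, and `Z(t) ⊆ J` because a forbidden word, being
shorter than `L`, embeds into `Z(t)` only if it already embeds into `b`. So `J` is the union of
the finitely many `Z(t) ⊆ J` with boundedly many clusters and finite multiplicities below `L`,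
and primitivity picks out one of them. Finally `Z(t)` determines `t`: the sign sequence of
`t[N]` is that of `t`, and a subword with the same sign sequence has smaller blocks.
-/

open List

section Alternating

lemma sublist_of_isChain_ne {w z : List Bool} (hz : z.IsChain (· ≠ ·))
    (h : 2 * w.length ≤ z.length) : w <+ z := by
  induction w generalizing z with
  | nil => exact nil_sublist z
  | cons x w ih =>
    obtain _ | ⟨y, z⟩ := z
    · simp at h
    simp only [length_cons] at h
    by_cases hxy : x = y
    · subst hxy
      exact (ih (z := z) hz.tail (by omega)).cons_cons x
    · obtain _ | ⟨y', z⟩ := z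
      · simp at h
        omega
      have hy' : y' = x := by
        have := (isChain_cons_cons.mp hz).1
        cases x <;> cases y <;> cases y' <;> simp_all
      subst hy'
      simp only [length_cons] at h
      exact ((ih (z := z) hz.tail.tail (by omega)).cons_cons y').cons y

lemma IsCoidealBW.length_lt_of_isChain_ne {J : Set BW} (hJ : IsCoidealBW J) {w z : BW}
    (hw : w ∉ J) (hz : z ∈ J) (hc : z.IsChain (· ≠ ·)) : z.length < 2 * w.length := by
  by_contra! h
  exact hw (hJ z hz w (sublist_of_isChain_ne hc h))

end Alternating

section Blocks

def blockWord (bs : List (Bool × ℕ)) : BW := (bs.map fun c => replicate c.2 c.1).flatten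

/-- `bs` is the run-length encoding of `blockWord bs`. -/
def IsBlockList (bs : List (Bool × ℕ)) : Prop :=
  bs.IsChain (fun c d => c.1 ≠ d.1) ∧ ∀ c ∈ bs, 0 < c.2

@[simp] lemma blockWord_nil : blockWord [] = [] := rfl

@[simp] lemma blockWord_cons (c : Bool × ℕ) (bs : List (Bool × ℕ)) :
    blockWord (c :: bs) = replicate c.2 c.1 ++ blockWord bs := rfl

lemma length_blockWord (bs : List (Bool × ℕ)) :
    (blockWord bs).length = (bs.map Prod.snd).sum := by
  induction bs with
  | nil => rfl
  | cons c bs ih => simp [ih]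

lemma IsBlockList.tail {c : Bool × ℕ} {bs : List (Bool × ℕ)} (h : IsBlockList (c :: bs)) :
    IsBlockList bs :=
  ⟨h.1.tail, fun d hd => h.2 d (mem_cons_of_mem c hd)⟩

lemma IsBlockList.head?_blockWord_ne {c : Bool × ℕ} {bs : List (Bool × ℕ)}
    (h : IsBlockList (c :: bs)) : (blockWord bs).head? ≠ some c.1 := by
  match bs, h with
  | [], _ => simp
  | d :: bs, h =>
    obtain ⟨k, hk⟩ := Nat.exists_eq_add_of_lt (h.2 d (by simp))
    have hcd := (isChain_cons_cons.mp h.1).1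
    simp [hk, replicate_succ, Ne.symm hcd]

lemma exists_isBlockList_blockWord_eq (a : BW) : ∃ bs, IsBlockList bs ∧ blockWord bs = a := by
  induction a with
  | nil => exact ⟨[], ⟨isChain_nil, by simp⟩, rfl⟩
  | cons x a ih =>
    obtain ⟨bs, hbs, rfl⟩ := ih
    match bs, hbs with
    | [], _ => exact ⟨[(x, 1)], ⟨isChain_singleton _, by simp⟩, rfl⟩
    | (y, n) :: bs, hbs =>
      by_cases hxy : x = y
      · subst hxy
        refine ⟨(x, n + 1) :: bs, ⟨?_, ?_⟩, by simp [replicate_succ]⟩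
        · cases bs with
          | nil => exact isChain_singleton _
          | cons d bs => exact isChain_cons_cons.mpr (isChain_cons_cons.mp hbs.1)
        · intro c hc
          rcases mem_cons.mp hc with rfl | hc
          · simp
          · exact hbs.2 c (mem_cons_of_mem _ hc)
      · exact ⟨(x, 1) :: (y, n) :: bs,
          ⟨isChain_cons_cons.mpr ⟨hxy, hbs.1⟩, by simpa using hbs.2⟩, rfl⟩

lemma map_fst_sublist_blockWord {bs : List (Bool × ℕ)} (hbs : ∀ c ∈ bs, 0 < c.2) :
    bs.map Prod.fst <+ blockWord bs := by
  induction bs with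
  | nil => exact nil_sublist _
  | cons c bs ih =>
    obtain ⟨k, hk⟩ := Nat.exists_eq_add_of_lt (hbs c (by simp))
    rw [map_cons, blockWord_cons, hk, replicate_succ, cons_append]
    exact ((ih fun d hd => hbs d (mem_cons_of_mem c hd)).trans
      (sublist_append_right _ _)).cons_cons _

/-- Blocks may grow arbitrarily without losing a given subword, and may also shrink, as long as
they stay at least as long as the subword. -/
lemma sublist_blockWord_of_forall₂ {W : ℕ} :
    ∀ {bs bs' : List (Bool × ℕ)} {w : BW}, w.length ≤ W →
      Forall₂ (fun c d => c.1 = d.1 ∧ (c.2 ≤ d.2 ∨ W ≤ d.2)) bs bs' →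
      w <+ blockWord bs → w <+ blockWord bs'
  | _, _, w, hw, .nil, h => h
  | c :: _, d :: _, w, hw, .cons ⟨hs, hcd⟩ hbs, h => by
    obtain ⟨w₁, w₂, rfl, h₁, h₂⟩ := sublist_append_iff.mp h
    simp only [length_append] at hw
    refine Sublist.append ?_ (sublist_blockWord_of_forall₂ (by omega) hbs h₂)
    obtain ⟨j, hj, rfl⟩ := sublist_replicate_iff.mp h₁
    simp only [length_replicate] at hw
    rw [hs, replicate_sublist_replicate]
    omega

end Blocks

section Signs

def signs : BW → List Bool
  | [] => []
  | x :: v => if (signs v).head? = some x then signs v else x :: signs v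

lemma head?_signs (a : BW) : (signs a).head? = a.head? := by
  cases a with
  | nil => rfl
  | cons x v =>
    simp only [signs]
    split <;> simp_all

lemma signs_sublist_signs {u v : BW} (h : u <+ v) : signs u <+ signs v := by
  induction h with
  | slnil => exact Sublist.refl _
  | cons x _ ih =>
    simp only [signs]
    split
    · exact ih
    · exact ih.cons x
  | @cons_cons u v x h ih =>
    simp only [signs]
    split_ifs with hu hv hv
    · exact ih
    · exact ih.cons x
    · obtain ⟨tl, htl⟩ : ∃ tl, signs v = x :: tl := by
        cases hs : signs v <;> simp_all
      rw [htl] at ih ⊢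
      rcases sublist_cons_iff.mp ih with ih | ⟨r, hr, -⟩
      · exact ih.cons_cons x
      · simp [hr] at hu
    · exact ih.cons_cons x

lemma signs_replicate_append {s : Bool} {n : ℕ} {w : BW} (hn : 0 < n)
    (hw : w.head? ≠ some s) : signs (replicate n s ++ w) = s :: signs w := by
  induction n with
  | zero => omega
  | succ n ih =>
    rcases Nat.eq_zero_or_pos n with rfl | hn
    · simp [signs, head?_signs, hw]
    · rw [replicate_succ, cons_append, signs, ih hn]
      simp

lemma signs_blockWord {bs : List (Bool × ℕ)} (hbs : IsBlockList bs) :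
    signs (blockWord bs) = bs.map Prod.fst := by
  induction bs with
  | nil => rfl
  | cons c bs ih =>
    rw [blockWord_cons, signs_replicate_append (hbs.2 c (by simp)) hbs.head?_blockWord_ne,
      ih hbs.tail, map_cons]

/-- A first block `replicate n s` can only be embedded into the first block `replicate m s`:
spilling it into `y` would give `y` more sign changes than `x`. -/
lemma replicate_append_sublist_replicate_append {s : Bool} {n m : ℕ} {x y : BW}
    (hx : x.head? ≠ some s) (hxy : (signs y).length ≤ (signs x).length)
    (h : replicate n s ++ x <+ replicate m s ++ y) : n ≤ m ∧ x <+ y := by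
  obtain ⟨l₁, l₂, he, h₁, h₂⟩ := sublist_append_iff.mp h
  obtain ⟨j, hjm, rfl⟩ := sublist_replicate_iff.mp h₁
  rcases le_or_gt j n with hjn | hnj
  · rw [← Nat.add_sub_cancel' hjn, replicate_add, append_assoc] at he
    have hl₂ := (append_cancel_left he).symm
    rcases Nat.eq_zero_or_pos (n - j) with hnj | hnj
    · rw [hnj, replicate_zero, nil_append] at hl₂
      exact ⟨by omega, hl₂ ▸ h₂⟩
    · have := (signs_sublist_signs h₂).length_le
      rw [hl₂, signs_replicate_append hnj hx, length_cons] at this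
      omega
  · rw [← Nat.add_sub_cancel' hnj.le, replicate_add, append_assoc] at he
    obtain ⟨k, hk⟩ := Nat.exists_eq_add_of_lt (Nat.sub_pos_of_lt hnj)
    rw [append_cancel_left he, hk, replicate_succ] at hx
    simp at hx

lemma forall₂_le_of_blockWord_sublist :
    ∀ {bs bs' : List (Bool × ℕ)}, IsBlockList bs → IsBlockList bs' →
      bs.map Prod.fst = bs'.map Prod.fst → blockWord bs <+ blockWord bs' →
      Forall₂ (fun c d => c.2 ≤ d.2) bs bs'
  | [], [], _, _, _, _ => .nil
  | c :: bs, d :: bs', hbs, hbs', hσ, h => by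
    simp only [map_cons, cons.injEq] at hσ
    rw [blockWord_cons, blockWord_cons, ← hσ.1] at h
    have hlen : (signs (blockWord bs')).length ≤ (signs (blockWord bs)).length := by
      rw [signs_blockWord hbs.tail, signs_blockWord hbs'.tail, hσ.2]
    obtain ⟨hcd, h⟩ := replicate_append_sublist_replicate_append hbs.head?_blockWord_ne hlen h
    exact .cons hcd (forall₂_le_of_blockWord_sublist hbs.tail hbs'.tail hσ.2 h)

end Signs

section Templates

def instantiate (N : ℕ) (cs : List (Bool × ℕ∞)) : List (Bool × ℕ) :=
  cs.map fun c => (c.1, if c.2 = ⊤ then N else c.2.toNat)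

lemma clWord_eq_blockWord (cs : List (Bool × ℕ∞)) (N : ℕ) :
    clWord cs N = blockWord (instantiate N cs) := by
  simp [clWord, blockWord, instantiate, Function.comp_def]

@[simp] lemma map_fst_instantiate (N : ℕ) (cs : List (Bool × ℕ∞)) :
    (instantiate N cs).map Prod.fst = cs.map Prod.fst := by
  simp [instantiate, Function.comp_def]

lemma isBlockList_instantiate (t : Template) {N : ℕ} (hN : 0 < N) :
    IsBlockList (instantiate N t.clusters) := by
  refine ⟨(isChain_map _).mpr t.alternating, ?_⟩
  simp only [instantiate, mem_map]
  rintro _ ⟨c, hc, rfl⟩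
  split_ifs with htop
  · exact hN
  · exact ENat.toNat_pos (t.pos c hc) htop

lemma signs_clWord (t : Template) {N : ℕ} (hN : 0 < N) :
    signs (clWord t.clusters N) = t.clusters.map Prod.fst := by
  rw [clWord_eq_blockWord, signs_blockWord (isBlockList_instantiate t hN), map_fst_instantiate]

lemma clWord_sublist_clWord (cs : List (Bool × ℕ∞)) {N N' : ℕ} (h : N ≤ N') :
    clWord cs N <+ clWord cs N' := by
  rw [clWord_eq_blockWord, clWord_eq_blockWord]
  refine sublist_blockWord_of_forall₂ le_rfl ?_ (Sublist.refl _)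
  simp only [instantiate, forall₂_map_left_iff, forall₂_map_right_iff, forall₂_same]
  intro c _
  split_ifs <;> simp [h]

lemma le_length_clWord (t : Template) (N : ℕ) : N ≤ (clWord t.clusters N).length := by
  obtain ⟨c, hc, htop⟩ := t.hasInf
  rw [clWord, length_flatten]
  refine le_trans ?_ (le_sum_of_mem (mem_map_of_mem (mem_map_of_mem hc)))
  simp [htop]

lemma exists_sublist_sublist_length_succ {α : Type*} {a b : List α} (h : a <+ b)
    (hlt : a.length < b.length) : ∃ c, a <+ c ∧ c <+ b ∧ c.length = a.length + 1 := by
  induction h with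
  | slnil => simp at hlt
  | @cons a b x h ih =>
    rcases lt_or_ge a.length b.length with hab | hab
    · obtain ⟨c, hac, hcb, hc⟩ := ih hab
      exact ⟨c, hac, hcb.cons x, hc⟩
    · obtain rfl := h.eq_of_length_le hab
      exact ⟨x :: a, sublist_cons_self x a, Sublist.refl _, rfl⟩
  | @cons_cons a b x _ ih =>
    obtain ⟨c, hac, hcb, hc⟩ := ih (by simpa using hlt)
    exact ⟨x :: c, hac.cons_cons x, hcb.cons_cons x, by simp [hc]⟩

lemma Zt_isSatCoidealBW (t : Template) : IsSatCoidealBW (Zt t) := by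
  refine ⟨fun a ⟨N, ha⟩ b hb => ⟨N, hb.trans ha⟩, ?_⟩
  rintro a ⟨N, ha⟩
  set N' := max N (a.length + 1)
  have hlt : a.length < (clWord t.clusters N').length :=
    lt_of_lt_of_le (by omega) (le_length_clWord t N')
  obtain ⟨c, hac, hc, hlen⟩ := exists_sublist_sublist_length_succ
    (ha.trans (clWord_sublist_clWord _ (le_max_left _ _))) hlt
  exact ⟨c, ⟨N', hc⟩, hac, hlen⟩

lemma map_fst_eq_of_Zt_eq {t t' : Template} (h : Zt t = Zt t') :
    t.clusters.map Prod.fst = t'.clusters.map Prod.fst := by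
  have key : ∀ {t t' : Template}, Zt t ⊆ Zt t' →
      t.clusters.map Prod.fst <+ t'.clusters.map Prod.fst := by
    intro t t' h
    obtain ⟨N, hN⟩ := h (show clWord t.clusters 1 ∈ Zt t from ⟨1, Sublist.refl _⟩)
    have := signs_sublist_signs (hN.trans (clWord_sublist_clWord _ (le_max_left N 1)))
    rwa [signs_clWord t one_pos, signs_clWord t' (by omega)] at this
  exact (key h.le).antisymm (key h.ge)

lemma le_of_ite_toNat_le {c d : ℕ∞} {N N' : ℕ} (hd : d ≠ ⊤ → d.toNat < N)
    (h : (if c = ⊤ then N else c.toNat) ≤ if d = ⊤ then N' else d.toNat) : c ≤ d := by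
  rcases eq_or_ne d ⊤ with rfl | hd'
  · exact le_top
  · have := hd hd'
    rw [if_neg hd'] at h
    split_ifs at h with hc
    · omega
    · lift c to ℕ using hc
      lift d to ℕ using hd'
      exact_mod_cast h

/-- Instantiating `t` with `N` larger than every finite multiplicity of `t'` forces each
infinite cluster of `t` onto an infinite cluster of `t'`. -/
lemma forall₂_le_of_Zt_subset {t t' : Template} (h : Zt t ⊆ Zt t')
    (hσ : t.clusters.map Prod.fst = t'.clusters.map Prod.fst) :
    Forall₂ (fun c d => c.2 ≤ d.2) t.clusters t'.clusters := by
  set N := (t'.clusters.map fun d => d.2.toNat).sum + 1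
  obtain ⟨N', hN'⟩ := h (show clWord t.clusters N ∈ Zt t from ⟨N, Sublist.refl _⟩)
  have hsub := hN'.trans (clWord_sublist_clWord _ (le_max_left N' 1))
  rw [clWord_eq_blockWord, clWord_eq_blockWord] at hsub
  have hle := forall₂_le_of_blockWord_sublist (isBlockList_instantiate t (by omega))
    (isBlockList_instantiate t' (by omega)) (by simpa using hσ) hsub
  simp only [instantiate, forall₂_map_left_iff, forall₂_map_right_iff] at hle
  refine forall₂_iff_zip.mpr ⟨hle.length_eq, fun hcd => ?_⟩
  refine le_of_ite_toNat_le (fun _ => ?_) (forall₂_iff_zip.mp hle |>.2 hcd)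
  exact Nat.lt_succ_of_le (le_sum_of_mem (mem_map_of_mem (of_mem_zip hcd).2))

lemma eq_of_forall₂_snd_le {l l' : List (Bool × ℕ∞)} (hσ : l.map Prod.fst = l'.map Prod.fst)
    (h : Forall₂ (fun c d => c.2 ≤ d.2) l l') (h' : Forall₂ (fun c d => c.2 ≤ d.2) l' l) :
    l = l' := by
  induction h with
  | nil => rfl
  | @cons c d l l' hcd _ ih =>
    simp only [map_cons, cons.injEq] at hσ
    cases h' with
    | cons hdc h' => rw [Prod.ext hσ.1 (le_antisymm hcd hdc), ih hσ.2 h']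

lemma Zt_injective : Function.Injective Zt := by
  intro t t' h
  have hσ := map_fst_eq_of_Zt_eq h
  have := eq_of_forall₂_snd_le hσ (forall₂_le_of_Zt_subset h.le hσ)
    (forall₂_le_of_Zt_subset h.ge hσ.symm)
  cases t; cases t'
  simpa using this

end Templates

section Coideals

lemma exists_short_sublist_notMem {α : Type*} [Finite α] (J : Set (List α)) :
    ∃ L, ∀ u ∉ J, ∃ w, w <+ u ∧ w ∉ J ∧ w.length < L := by
  classical
  set M := {w : List α | w ∉ J ∧ ∀ v, v <+ w → v ∉ J → v = w}
  have hM : M.Finite := by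
    refine IsAntichain.finite_of_partiallyWellOrderedOn (r := SublistForall₂ (· = ·)) ?_
      ((Set.finite_univ.partiallyWellOrderedOn.partiallyWellOrderedOn_sublistForall₂
        (· = ·)).mono fun _ _ x _ => Set.mem_univ x)
    intro w _ v hv hwv h
    obtain ⟨l, hl, hlv⟩ := sublistForall₂_iff.mp h
    rw [forall₂_eq_eq_eq] at hl
    exact hwv (hv.2 w (hl ▸ hlv) ‹w ∈ M›.1)
  refine ⟨hM.toFinset.sup List.length + 1, fun u hu => ?_⟩
  have hex : ∃ n, ∃ w, w <+ u ∧ w ∉ J ∧ w.length = n := ⟨_, u, Sublist.refl _, hu, rfl⟩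
  obtain ⟨w, hwu, hwJ, hw⟩ := Nat.find_spec hex
  refine ⟨w, hwu, hwJ, Nat.lt_succ_of_le (Finset.le_sup (f := List.length) ?_)⟩
  refine hM.mem_toFinset.mpr ⟨hwJ, fun v hvw hvJ => hvw.eq_of_length_le ?_⟩
  exact hw ▸ Nat.find_min' hex ⟨v, hvw.trans hwu, hvJ, rfl⟩

lemma IsSatCoidealBW.exists_sublist_le_length {J : Set BW} (hJ : IsSatCoidealBW J) {a : BW}
    (ha : a ∈ J) (n : ℕ) : ∃ b ∈ J, a <+ b ∧ n ≤ b.length := by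
  induction n with
  | zero => exact ⟨a, ha, Sublist.refl _, Nat.zero_le _⟩
  | succ n ih =>
    obtain ⟨b, hb, hab, hn⟩ := ih
    obtain ⟨c, hc, hbc, hlen⟩ := hJ.2 b hb
    exact ⟨c, hc, hab.trans hbc, by omega⟩

lemma isSatCoidealBW_biUnion {ι : Type*} {K : ι → Set BW} {s : Set ι}
    (hK : ∀ i ∈ s, IsSatCoidealBW (K i)) : IsSatCoidealBW (⋃ i ∈ s, K i) := by
  simp only [IsSatCoidealBW, IsCoidealBW, Set.mem_iUnion₂]
  refine ⟨fun a ⟨i, hi, ha⟩ b hb => ⟨i, hi, (hK i hi).1 a ha b hb⟩, fun a ⟨i, hi, ha⟩ => ?_⟩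
  obtain ⟨b, hb, hab⟩ := (hK i hi).2 a ha
  exact ⟨b, ⟨i, hi, hb⟩, hab⟩

lemma IsPrimCoidealBW.exists_eq_of_eq_biUnion {J : Set BW} (hJ : IsPrimCoidealBW J)
    (hne : J.Nonempty) {ι : Type*} {K : ι → Set BW} {s : Set ι} (hs : s.Finite)
    (hK : ∀ i ∈ s, IsSatCoidealBW (K i)) (h : J = ⋃ i ∈ s, K i) : ∃ i ∈ s, J = K i := by
  induction s, hs using Set.Finite.induction_on with
  | empty => simp [h] at hne
  | @insert i s _ _ ih =>
    rw [Set.biUnion_insert] at h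
    rcases hJ.2 _ _ (hK i (Set.mem_insert i s))
      (isSatCoidealBW_biUnion fun j hj => hK j (Set.mem_insert_of_mem i hj)) h with h | h
    · exact ⟨i, Set.mem_insert i s, h⟩
    · obtain ⟨j, hj, hJj⟩ := ih (fun j hj => hK j (Set.mem_insert_of_mem i hj)) h
      exact ⟨j, Set.mem_insert_of_mem i hj, hJj⟩

end Coideals

section Bump

def bumpBlocks (L : ℕ) (bs : List (Bool × ℕ)) : List (Bool × ℕ∞) :=
  bs.map fun c => (c.1, if L ≤ c.2 then ⊤ else c.2)

def bumpTemplate (L : ℕ) (bs : List (Bool × ℕ)) (hbs : IsBlockList bs)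
    (hL : ∃ c ∈ bs, L ≤ c.2) : Template where
  clusters := bumpBlocks L bs
  ne := by
    obtain ⟨c, hc, -⟩ := hL
    simpa [bumpBlocks] using ne_nil_of_mem hc
  pos := by
    simp only [bumpBlocks, mem_map]
    rintro _ ⟨c, hc, rfl⟩
    split_ifs
    · simp
    · simpa using (hbs.2 c hc).ne'
  alternating := (isChain_map _).mpr hbs.1
  hasInf := by
    obtain ⟨c, hc, hLc⟩ := hL
    exact ⟨_, mem_map_of_mem hc, if_pos hLc⟩

lemma instantiate_bumpBlocks (N L : ℕ) (bs : List (Bool × ℕ)) :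
    instantiate N (bumpBlocks L bs) = bs.map fun c => (c.1, if L ≤ c.2 then N else c.2) := by
  simp only [instantiate, bumpBlocks, map_map]
  congr 1
  funext c
  by_cases h : L ≤ c.2 <;> simp [h]

lemma blockWord_mem_Zt_bumpTemplate {L : ℕ} {bs : List (Bool × ℕ)} (hbs : IsBlockList bs)
    (hL : ∃ c ∈ bs, L ≤ c.2) : blockWord bs ∈ Zt (bumpTemplate L bs hbs hL) := by
  refine ⟨(blockWord bs).length, ?_⟩
  show blockWord bs <+ clWord (bumpBlocks L bs) _
  rw [clWord_eq_blockWord, instantiate_bumpBlocks]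
  refine sublist_blockWord_of_forall₂ le_rfl ?_ (Sublist.refl _)
  simp only [forall₂_map_right_iff, forall₂_same, true_and]
  intro c hc
  refine Or.inl ?_
  split_ifs
  · rw [length_blockWord]
    exact le_sum_of_mem (mem_map_of_mem hc)
  · exact le_rfl

/-- A word shorter than `L` cannot tell a block of length at least `L` from an infinite one. -/
lemma sublist_blockWord_of_sublist_clWord_bumpBlocks {L N : ℕ} {bs : List (Bool × ℕ)} {w : BW}
    (hw : w.length < L) (h : w <+ clWord (bumpBlocks L bs) N) : w <+ blockWord bs := by
  rw [clWord_eq_blockWord, instantiate_bumpBlocks] at h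
  refine sublist_blockWord_of_forall₂ le_rfl ?_ h
  simp only [forall₂_map_left_iff, forall₂_same, true_and]
  intro c _
  split_ifs with hc
  · exact Or.inr (by omega)
  · exact Or.inl le_rfl

end Bump

section Bounded

def boundedTemplates (B L : ℕ) : Set Template :=
  {t | t.clusters.length < B ∧ ∀ c ∈ t.clusters, c.2 = ⊤ ∨ c.2 < L}

lemma boundedTemplates_finite (B L : ℕ) : (boundedTemplates B L).Finite := by
  set S : Set (Bool × ℕ∞) := Set.univ ×ˢ insert ⊤ ((↑) '' Set.Iio L)
  have hS : S.Finite := Set.finite_univ.prod (((Set.finite_Iio L).image _).insert ⊤)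
  have : Finite S := hS.to_subtype
  have hlists : {l : List (Bool × ℕ∞) | l.length < B ∧ ∀ c ∈ l, c ∈ S}.Finite := by
    refine ((List.finite_length_lt (α := S) B).image (map Subtype.val)).subset ?_
    rintro l ⟨hl, hS⟩
    lift l to List S using hS
    exact ⟨l, by simpa using hl, rfl⟩
  refine Set.Finite.of_finite_image (f := Template.clusters) (hlists.subset ?_) fun t _ t' _ h => ?_
  · rintro _ ⟨t, ⟨hlen, ht⟩, rfl⟩
    refine ⟨hlen, fun c hc => ⟨trivial, ?_⟩⟩
    rcases ht c hc with htop | hlt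
    · exact Or.inl htop
    · lift c.2 to ℕ using hlt.ne_top with m
      exact Or.inr ⟨m, by simpa using hlt, rfl⟩
  · cases t; cases t'
    simpa using h

lemma exists_mem_boundedTemplates {J : Set BW} (hJ : IsSatCoidealBW J) {L B : ℕ}
    (hL : ∀ u ∉ J, ∃ w, w <+ u ∧ w ∉ J ∧ w.length < L)
    (hB : ∀ z ∈ J, z.IsChain (· ≠ ·) → z.length < B) {a : BW} (ha : a ∈ J) :
    ∃ t ∈ boundedTemplates B L, a ∈ Zt t ∧ Zt t ⊆ J := by
  obtain ⟨b, hbJ, hab, hb⟩ := hJ.exists_sublist_le_length ha (B * L + 1)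
  obtain ⟨bs, hbs, rfl⟩ := exists_isBlockList_blockWord_eq b
  have hlen : bs.length < B :=
    length_map (f := Prod.fst) ▸ hB _ (hJ.1 _ hbJ _ (map_fst_sublist_blockWord hbs.2))
      ((isChain_map _).mpr hbs.1)
  have hL' : ∃ c ∈ bs, L ≤ c.2 := by
    by_contra! h
    have := sum_le_card_nsmul (bs.map Prod.snd) L (by
      simp only [mem_map]
      rintro _ ⟨c, hc, rfl⟩
      exact (h c hc).le)
    rw [length_blockWord] at hb
    simp only [length_map, smul_eq_mul] at this
    nlinarith
  refine ⟨bumpTemplate L bs hbs hL', ⟨by simpa [bumpTemplate, bumpBlocks] using hlen, ?_⟩,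
    Zt_isSatCoidealBW _ |>.1 _ (blockWord_mem_Zt_bumpTemplate hbs hL') _ hab, ?_⟩
  · simp only [bumpTemplate, bumpBlocks, mem_map]
    rintro _ ⟨c, -, rfl⟩
    split_ifs with hc
    · exact Or.inl rfl
    · exact Or.inr (Nat.cast_lt.mpr (not_le.mp hc))
  · rintro u ⟨N, hu⟩
    by_contra huJ
    obtain ⟨w, hwu, hwJ, hw⟩ := hL u huJ
    exact hwJ (hJ.1 _ hbJ w (sublist_blockWord_of_sublist_clWord_bumpBlocks hw (hwu.trans hu)))

end Bounded

/-- Every proper nonempty saturated primitive coideal of the zigzag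
graph is of the form `Z(t)` for a unique template `t`. -/
theorem primitive_coideal_eq_Zt (J : Set BW) (hJ : IsPrimCoidealBW J)
    (hne : J.Nonempty) (hproper : J ≠ Set.univ) :
    ∃! t : Template, J = Zt t := by
  obtain ⟨w₀, hw₀⟩ := (Set.ne_univ_iff_exists_notMem J).mp hproper
  obtain ⟨L, hL⟩ := exists_short_sublist_notMem J
  have hB : ∀ z ∈ J, z.IsChain (· ≠ ·) → z.length < 2 * w₀.length :=
    fun z hz hc => hJ.1.1.length_lt_of_isChain_ne hw₀ hz hc
  set T := {t ∈ boundedTemplates (2 * w₀.length) L | Zt t ⊆ J}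
  have hJT : J = ⋃ t ∈ T, Zt t := by
    ext a
    simp only [Set.mem_iUnion₂]
    refine ⟨fun ha => ?_, fun ⟨t, ht, hat⟩ => ht.2 hat⟩
    obtain ⟨t, ht, hat, htJ⟩ := exists_mem_boundedTemplates hJ.1 hL hB ha
    exact ⟨t, ⟨ht, htJ⟩, hat⟩
  obtain ⟨t, -, rfl⟩ := hJ.exists_eq_of_eq_biUnion hne
    ((boundedTemplates_finite _ _).sep _) (fun t _ => Zt_isSatCoidealBW t) hJT
  exact ⟨t, rfl, fun t' ht' => Zt_injective ht'.symm⟩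

end Zigzag
end

section
/- Let t be a semifinite template with zigzag flange fl(t) = (a₀, …, a_k) and sections t₁, …, t_k, so that t = (a₀, t₁, a₁, …, a_{k−1}, t_k, a_k). If λ ∈ Z(t) ∖ J(t), then bw(λ) = a₀ ⊔ bw(λ^{(1)}) ⊔ a₁ ⊔ ⋯ ⊔ bw(λ^{(k)}) ⊔ a_k for some λ^{(1)} ∈ Z(t₁), …, λ^{(k)} ∈ Z(t_k) (empty outermost flange words being ignored), and the tuple (λ^{(1)}, …, λ^{(k)}) is uniquely determined by λ. -/
/-!
Common definitions: the zigzag graph on binary words, templates and their coideals,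
zigzag flanges and sections, the functions `F_λ(u)` and `φ_{t,w}`, and harmonic /
semifinite / indecomposable functions on subgraphs of the zigzag graph.
-/

open scoped ENNReal NNReal

/-!
A word of `Z(t)` splits along the pieces of `t = (a₀, t₁, a₁, …, t_k, a_k)` into words
`wᵢ ∈ Z(tᵢ)` separated by subwords of the flange words `aᵢ`. If one of these subwords is
proper, it is a subword of `aᵢ` with one symbol deleted, and the word lies in `J(t)`; otherwise
the `wᵢ` form the required decomposition.

For uniqueness, look at the first section where two decompositions differ, with `wᵢ` shorter
than `wᵢ'`. Then `aᵢ` followed by the rest of the second decomposition sits inside the first one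
shifted by at least one letter, so the first letter of `aᵢ` is superfluous and the word again lies
in `J(t)`; this uses that the flange words between two sections are nonempty. In both cases the
deleted symbol belongs to a non-separating cluster: its neighbours inside `aᵢ` are finite, and an
interior flange word is never a single one-symbol cluster.
-/

theorem List.sublist_tail_append_of_append_eq {α : Type*} {x y y' v : List α}
    (hx : x ≠ []) (hv : v ≠ []) (h : x ++ y = v ++ (x ++ y')) :
    (x ++ y').Sublist (x.tail ++ y) := by
  have hdrop : x ++ y' = (x ++ y).drop v.length := by rw [h, List.drop_left]
  rw [hdrop, ← List.tail_append_of_ne_nil hx, ← List.drop_one]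
  exact List.drop_sublist_drop_left _ (List.length_pos_of_ne_nil hv)

theorem List.forall₂_ofFn_iff {α β : Type*} {R : α → β → Prop} {n : ℕ}
    (f : Fin n → α) (g : Fin n → β) :
    List.Forall₂ R (List.ofFn f) (List.ofFn g) ↔ ∀ i, R (f i) (g i) := by
  simp [List.forall₂_iff_get, Fin.forall_iff]

namespace Zigzag

abbrev Cluster := Bool × ℕ∞

section Words

variable {cs ds : List Cluster} {a b : BW}

lemma clWord_cons (c : Cluster) (cs : List Cluster) (N : ℕ) :
    clWord (c :: cs) N = List.replicate (if c.2 = ⊤ then N else c.2.toNat) c.1 ++ clWord cs N :=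
  rfl

lemma clWord_append (cs ds : List Cluster) (N : ℕ) :
    clWord (cs ++ ds) N = clWord cs N ++ clWord ds N := by
  simp [clWord]

lemma clWord_sublist_clWord_s5 (cs : List Cluster) {M N : ℕ} (h : M ≤ N) :
    (clWord cs M).Sublist (clWord cs N) := by
  induction cs with
  | nil => exact .slnil
  | cons c cs ih =>
    refine .append ?_ ih
    dsimp only
    split_ifs
    exacts [(List.replicate_sublist_replicate _).2 h, .refl _]

lemma flangeWord_cons (c : Cluster) (cs : List Cluster) :
    flangeWord (c :: cs) = List.replicate c.2.toNat c.1 ++ flangeWord cs :=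
  rfl

lemma flangeWord_eq_clWord (h : ∀ c ∈ cs, c.2 ≠ ⊤) (N : ℕ) :
    flangeWord cs = clWord cs N := by
  induction cs with
  | nil => rfl
  | cons c cs ih =>
    rw [flangeWord_cons, clWord_cons, if_neg (h c (.head _)),
      ih fun c hc => h c (.tail _ hc)]

/-- Infinite clusters contribute nothing to `flangeWord`, since `(⊤ : ℕ∞).toNat = 0`. -/
lemma flangeWord_sublist_clWord (cs : List Cluster) (N : ℕ) :
    (flangeWord cs).Sublist (clWord cs N) := by
  induction cs with
  | nil => exact .slnil
  | cons c cs ih =>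
    refine .append ?_ ih
    dsimp only
    split_ifs with hc
    · simp [hc]
    · exact .refl _

lemma flangeWord_ne_nil (hne : cs ≠ []) (hpos : ∀ c ∈ cs, c.2 ≠ 0)
    (hfin : ∀ c ∈ cs, c.2 ≠ ⊤) : flangeWord cs ≠ [] := by
  obtain ⟨c, cs, rfl⟩ := List.exists_cons_of_ne_nil hne
  have : c.2.toNat ≠ 0 := by
    simpa [ENat.toNat_eq_zero] using And.intro (hpos c (.head _)) (hfin c (.head _))
  simp [flangeWord_cons, this]

lemma mem_Zcl_of_sublist (h : a.Sublist b) (hb : b ∈ Zcl cs) : a ∈ Zcl cs := by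
  obtain ⟨N, hN⟩ := hb
  exact ⟨N, h.trans hN⟩

lemma mem_Zcl_append_iff :
    a ∈ Zcl (cs ++ ds) ↔ ∃ x y, a = x ++ y ∧ x ∈ Zcl cs ∧ y ∈ Zcl ds := by
  constructor
  · rintro ⟨N, hN⟩
    rw [clWord_append] at hN
    obtain ⟨x, y, rfl, hx, hy⟩ := List.sublist_append_iff.1 hN
    exact ⟨x, y, rfl, ⟨N, hx⟩, ⟨N, hy⟩⟩
  · rintro ⟨x, y, rfl, ⟨M, hM⟩, ⟨N, hN⟩⟩
    refine ⟨max M N, ?_⟩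
    rw [clWord_append]
    exact (hM.trans (clWord_sublist_clWord_s5 _ (le_max_left _ _))).append
      (hN.trans (clWord_sublist_clWord_s5 _ (le_max_right _ _)))

lemma append_mem_Zcl {x y : BW} (hx : x ∈ Zcl cs) (hy : y ∈ Zcl ds) :
    x ++ y ∈ Zcl (cs ++ ds) :=
  mem_Zcl_append_iff.2 ⟨x, y, rfl, hx, hy⟩

lemma nil_mem_Zcl (cs : List Cluster) : [] ∈ Zcl cs := ⟨0, List.nil_sublist _⟩

lemma eq_nil_of_mem_Zcl_nil (h : a ∈ Zcl []) : a = [] := by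
  obtain ⟨N, hN⟩ := h
  simpa [clWord] using hN

lemma flangeWord_mem_Zcl (cs : List Cluster) : flangeWord cs ∈ Zcl cs :=
  ⟨0, flangeWord_sublist_clWord cs 0⟩

lemma mem_Zcl_iff_sublist_flangeWord (h : ∀ c ∈ cs, c.2 ≠ ⊤) :
    a ∈ Zcl cs ↔ a.Sublist (flangeWord cs) := by
  refine ⟨fun ⟨N, hN⟩ => ?_, fun ha => mem_Zcl_of_sublist ha (flangeWord_mem_Zcl cs)⟩
  rwa [flangeWord_eq_clWord h N]

lemma exists_mem_Zcl_decrement_of_sublist_flangeWord :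
    ∀ {cs : List Cluster} {a : BW}, a.Sublist (flangeWord cs) → a ≠ flangeWord cs →
      ∃ F₁ c F₂, cs = F₁ ++ c :: F₂ ∧ a ∈ Zcl (F₁ ++ (c.1, c.2 - 1) :: F₂)
  | [], a, ha, hne => absurd (List.sublist_nil.1 ha) hne
  | c :: cs, a, ha, hne => by
    rw [flangeWord_cons] at ha
    obtain ⟨x, y, rfl, hx, hy⟩ := List.sublist_append_iff.1 ha
    obtain ⟨n, hn, rfl⟩ := List.sublist_replicate_iff.1 hx
    obtain hn | hn := hn.lt_or_eq
    · refine ⟨[], c, cs, rfl, mem_Zcl_of_sublist (.append ?_ hy) (flangeWord_mem_Zcl _)⟩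
      dsimp only
      rw [ENat.toNat_sub ENat.one_ne_top, ENat.toNat_one]
      exact (List.replicate_sublist_replicate _).2 (by omega)
    · have hy' : y ≠ flangeWord cs := by
        rintro rfl
        exact hne (by rw [hn, flangeWord_cons])
      obtain ⟨F₁, d, F₂, rfl, hmem⟩ := exists_mem_Zcl_decrement_of_sublist_flangeWord hy hy'
      refine ⟨c :: F₁, d, F₂, rfl, ?_⟩
      rw [hn]
      have hc : List.replicate c.2.toNat c.1 ∈ Zcl [c] :=
        mem_Zcl_of_sublist (by simp [flangeWord]) (flangeWord_mem_Zcl [c])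
      exact append_mem_Zcl (cs := [c]) hc hmem

end Words

/-- A block: the clusters of a section, then those of the flange word following it. -/
abbrev Block := List Cluster × List Cluster

def clustersOf (L : List Block) : List Cluster := (L.map fun p => p.1 ++ p.2).flatten

def assembleBlocks (ws : List BW) (L : List Block) : BW :=
  (List.zipWith (fun w p => w ++ flangeWord p.2) ws L).flatten

abbrev FitsSections (ws : List BW) (L : List Block) : Prop :=
  List.Forall₂ (fun w p => w ∈ Zcl p.1) ws L

/-- The analogue of `Jt` for a list of blocks. -/
def Jblocks (L : List Block) : Set BW :=
  {a | ∃ L₁ p L₂ F₁ c F₂, L = L₁ ++ p :: L₂ ∧ p.2 = F₁ ++ c :: F₂ ∧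
    a ∈ Zcl (clustersOf L₁ ++ p.1 ++ F₁ ++ (c.1, c.2 - 1) :: (F₂ ++ clustersOf L₂))}

def SectionsSeparated (L : List Block) : Prop :=
  ∀ L₁ p q L₂, L = L₁ ++ p :: q :: L₂ → flangeWord p.2 ≠ [] ∨ p.1 = []

section Blocks

variable {L : List Block} {p : Block} {x y : BW}

lemma clustersOf_cons (p : Block) (L : List Block) :
    clustersOf (p :: L) = p.1 ++ p.2 ++ clustersOf L := by
  simp [clustersOf]

lemma assembleBlocks_cons (w : BW) (ws : List BW) (p : Block) (L : List Block) :
    assembleBlocks (w :: ws) (p :: L) = w ++ flangeWord p.2 ++ assembleBlocks ws L := by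
  simp [assembleBlocks]

lemma assembleBlocks_nil (ws : List BW) : assembleBlocks ws [] = [] := by
  simp [assembleBlocks]

lemma assembleBlocks_mem_Zcl : ∀ {L : List Block} {ws : List BW}, FitsSections ws L →
    assembleBlocks ws L ∈ Zcl (clustersOf L)
  | [], [], .nil => nil_mem_Zcl _
  | p :: _, _ :: _, .cons hw hws => by
    rw [assembleBlocks_cons, clustersOf_cons]
    exact append_mem_Zcl (append_mem_Zcl hw (flangeWord_mem_Zcl p.2)) (assembleBlocks_mem_Zcl hws)

lemma assembleBlocks_ofFn {n : ℕ} (ℓ : Fin n → BW) (g : Fin n → Block) :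
    assembleBlocks (List.ofFn ℓ) (List.ofFn g) =
      (List.ofFn fun i => ℓ i ++ flangeWord (g i).2).flatten := by
  rw [assembleBlocks]
  congr 1
  apply List.ext_getElem <;> simp

lemma SectionsSeparated.of_cons (h : SectionsSeparated (p :: L)) : SectionsSeparated L :=
  fun L₁ p' q L₂ hL => h (p :: L₁) p' q L₂ (by rw [hL, List.cons_append])

lemma mem_Jblocks_cons_of_mem_Zcl_decrement {F₁ F₂ : List Cluster} {c : Cluster}
    (hx : x ∈ Zcl p.1) (hp : p.2 = F₁ ++ c :: F₂)
    (hy : y ∈ Zcl (F₁ ++ (c.1, c.2 - 1) :: (F₂ ++ clustersOf L))) :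
    x ++ y ∈ Jblocks (p :: L) :=
  ⟨[], p, L, F₁, c, F₂, rfl, hp, by simpa [clustersOf] using append_mem_Zcl hx hy⟩

lemma mem_Jblocks_cons {z : BW} (hx : x ∈ Zcl p.1) (hy : y ∈ Zcl p.2) (hz : z ∈ Jblocks L) :
    x ++ y ++ z ∈ Jblocks (p :: L) := by
  obtain ⟨L₁, q, L₂, F₁, c, F₂, rfl, hq, hz⟩ := hz
  refine ⟨p :: L₁, q, L₂, F₁, c, F₂, rfl, hq, ?_⟩
  simpa [clustersOf_cons] using append_mem_Zcl (append_mem_Zcl hx hy) hz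

lemma exists_assembleBlocks_or_mem_Jblocks :
    ∀ {L : List Block}, (∀ p ∈ L, ∀ c ∈ p.2, c.2 ≠ ⊤) →
      ∀ {a : BW}, a ∈ Zcl (clustersOf L) →
      (∃ ws, FitsSections ws L ∧ a = assembleBlocks ws L) ∨ a ∈ Jblocks L
  | [], _, _, ha => .inl ⟨[], .nil, eq_nil_of_mem_Zcl_nil ha⟩
  | p :: L, hfin, _, ha => by
    rw [List.forall_mem_cons] at hfin
    rw [clustersOf_cons, mem_Zcl_append_iff] at ha
    obtain ⟨_, z, rfl, hxy, hz⟩ := ha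
    obtain ⟨x, y, rfl, hx, hy⟩ := mem_Zcl_append_iff.1 hxy
    rw [mem_Zcl_iff_sublist_flangeWord hfin.1] at hy
    by_cases hyF : y = flangeWord p.2
    · subst hyF
      rcases exists_assembleBlocks_or_mem_Jblocks hfin.2 hz with ⟨ws, hws, rfl⟩ | hJ
      · exact .inl ⟨x :: ws, .cons hx hws, (assembleBlocks_cons ..).symm⟩
      · exact .inr (mem_Jblocks_cons hx (flangeWord_mem_Zcl _) hJ)
    · obtain ⟨F₁, c, F₂, hp, hmem⟩ := exists_mem_Zcl_decrement_of_sublist_flangeWord hy hyF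
      right
      rw [List.append_assoc]
      exact mem_Jblocks_cons_of_mem_Zcl_decrement hx hp (by simpa using append_mem_Zcl hmem hz)

lemma mem_Jblocks_cons_of_append_eq {w w' Y Y' : BW} (hw' : w' ∈ Zcl p.1)
    (hY : Y ∈ Zcl (clustersOf L)) (hF : flangeWord p.2 ≠ []) (hlt : w.length < w'.length)
    (h : w ++ flangeWord p.2 ++ Y = w' ++ flangeWord p.2 ++ Y') :
    w' ++ flangeWord p.2 ++ Y' ∈ Jblocks (p :: L) := by
  set F := flangeWord p.2
  obtain ⟨v, rfl⟩ : w <+: w' := List.prefix_of_prefix_length_le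
    ⟨F ++ Y, (List.append_assoc ..).symm⟩ ⟨F ++ Y', by rw [h, List.append_assoc]⟩ hlt.le
  have hv : v ≠ [] := by
    rintro rfl
    simp at hlt
  have hshift : F ++ Y = v ++ (F ++ Y') := by simpa using h
  have htail : F.tail ≠ F := fun h => by
    have hlen := congrArg List.length h
    rw [List.length_tail] at hlen
    exact hF (List.eq_nil_of_length_eq_zero (by omega))
  obtain ⟨F₁, c, F₂, hp, hmem⟩ :=
    exists_mem_Zcl_decrement_of_sublist_flangeWord (List.tail_sublist F) htail
  rw [List.append_assoc]
  refine mem_Jblocks_cons_of_mem_Zcl_decrement hw' hp ?_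
  exact mem_Zcl_of_sublist (List.sublist_tail_append_of_append_eq hF hv hshift)
    (by simpa using append_mem_Zcl hmem hY)

lemma eq_or_mem_Jblocks_of_assembleBlocks_eq :
    ∀ {L : List Block}, SectionsSeparated L → ∀ {ws ws' : List BW},
      FitsSections ws L → FitsSections ws' L → assembleBlocks ws L = assembleBlocks ws' L →
        ws = ws' ∨ assembleBlocks ws L ∈ Jblocks L
  | [], _, _, _, .nil, .nil, _ => .inl rfl
  | p :: L, hsep, _, _, .cons (a := w) (l₁ := u) hw hu, .cons (a := w') (l₁ := u') hw' hu',
      heq => by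
    simp only [assembleBlocks_cons] at heq ⊢
    by_cases hww : w = w'
    · subst hww
      have hY : assembleBlocks u L = assembleBlocks u' L := by simpa using heq
      rcases eq_or_mem_Jblocks_of_assembleBlocks_eq hsep.of_cons hu hu' hY with rfl | hJ
      · exact .inl rfl
      · exact .inr (mem_Jblocks_cons hw (flangeWord_mem_Zcl _) hJ)
    right
    have hF : flangeWord p.2 ≠ [] := by
      rcases L with _ | ⟨q, L₂⟩
      · rw [assembleBlocks_nil, assembleBlocks_nil, List.append_nil, List.append_nil] at heq
        exact absurd (List.append_cancel_right heq) hww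
      · refine (hsep [] p q L₂ rfl).resolve_right fun hp => hww ?_
        rw [hp] at hw hw'
        rw [eq_nil_of_mem_Zcl_nil hw, eq_nil_of_mem_Zcl_nil hw']
    have hlen : w.length ≠ w'.length := fun hlen =>
      hww (List.append_inj (by simpa using heq) hlen).1
    rcases hlen.lt_or_gt with hlt | hlt
    · rw [heq]
      exact mem_Jblocks_cons_of_append_eq hw' (assembleBlocks_mem_Zcl hu) hF hlt heq
    · exact mem_Jblocks_cons_of_append_eq hw (assembleBlocks_mem_Zcl hu') hF hlt heq.symm

end Blocks

lemma Template.isSep.eq_one_and_neighbours_eq_top {t : Template} {U V : List Cluster} {c : Cluster}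
    (h : t.clusters = U ++ c :: V) (hsep : t.isSep U.length) :
    c.2 = 1 ∧ (∃ d ∈ U.getLast?, d.2 = ⊤) ∧ ∃ d ∈ V.head?, d.2 = ⊤ := by
  obtain ⟨h0, h1, h2, h3, h4⟩ := hsep
  rw [h, List.getD_append_right _ _ _ _ le_rfl] at h2
  rw [h, List.getD_append_right _ _ _ _ (by omega)] at h4
  obtain rfl | ⟨U, d, rfl⟩ := U.eq_nil_or_concat
  · simp at h0
  rw [h, List.concat_eq_append, List.append_assoc,
    List.getD_append_right _ _ _ _ (by simp)] at h3
  rcases V with _ | ⟨e, V⟩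
  · simp [h] at h1
  simp_all

namespace SectionData

variable {t : Template} (D : SectionData t)

/-- The first block has an empty section, so that every flange word follows a section. -/
def blocks : List Block :=
  ([], D.A 0) :: List.ofFn fun i => ((D.T i).clusters, D.A i.succ)

lemma clustersOf_blocks : clustersOf D.blocks = t.clusters := by
  rw [D.concat, blocks, clustersOf_cons]
  simp [clustersOf, List.map_ofFn, Function.comp_def]

lemma blocks_flange_ne_top : ∀ p ∈ D.blocks, ∀ c ∈ p.2, c.2 ≠ ⊤ := by
  simp only [blocks, List.forall_mem_cons, List.mem_ofFn, forall_exists_index]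
  exact ⟨D.finA 0, by rintro _ i rfl; exact D.finA i.succ⟩

lemma eq_nil_or_interior_of_blocks_eq {L₁ L₂ : List Block} {p q : Block}
    (h : D.blocks = L₁ ++ p :: q :: L₂) :
    (L₁ = [] ∧ p.1 = []) ∨
      ∃ j : Fin (D.k + 1), (j : ℕ) ≠ 0 ∧ (j : ℕ) ≠ D.k ∧ p.2 = D.A j := by
  rcases L₁ with _ | ⟨b, L₁⟩
  · simp only [blocks, List.nil_append, List.cons.injEq] at h
    exact .inl ⟨rfl, by rw [← h.1]⟩
  right
  simp only [blocks, List.cons_append, List.cons.injEq] at h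
  have hlen : L₁.length + 1 < D.k := by
    have := congrArg List.length h.2
    simp only [List.length_ofFn, List.length_append, List.length_cons] at this
    omega
  have hp := List.getElem_of_append h.2 rfl
  rw [List.getElem_ofFn] at hp
  exact ⟨(⟨L₁.length, by omega⟩ : Fin D.k).succ, by simp, by simp; omega, by rw [← hp]⟩

lemma mem_clusters_of_mem_blocks {p : Block} {c : Cluster} (hp : p ∈ D.blocks) (hc : c ∈ p.2) :
    c ∈ t.clusters := by
  rw [← D.clustersOf_blocks]
  exact List.mem_flatten.2 ⟨_, List.mem_map_of_mem hp, List.mem_append_right _ hc⟩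

lemma sectionsSeparated_blocks : SectionsSeparated D.blocks := by
  intro L₁ p q L₂ h
  rcases D.eq_nil_or_interior_of_blocks_eq h with ⟨-, hp⟩ | ⟨j, hj0, hjk, hp⟩
  · exact .inr hp
  have hpmem : p ∈ D.blocks := by simp [h]
  exact .inl <| flangeWord_ne_nil (hp ▸ D.interior_ne j hj0 hjk)
    (fun c hc => t.pos c (D.mem_clusters_of_mem_blocks hpmem hc)) (D.blocks_flange_ne_top p hpmem)

lemma Jblocks_subset_Jt : Jblocks D.blocks ⊆ Jt t := by
  rintro a ⟨L₁, p, L₂, F₁, c, F₂, hL, hp, ha⟩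
  have hfin : ∀ d ∈ p.2, d.2 ≠ ⊤ := D.blocks_flange_ne_top p (by simp [hL])
  set U := clustersOf L₁ ++ p.1 ++ F₁
  set V := F₂ ++ clustersOf L₂
  have ht : t.clusters = U ++ c :: V := by
    rw [← D.clustersOf_blocks, hL]
    simp [clustersOf, U, V, hp]
  refine ⟨U.length, ⟨by simp [ht], ?_, fun hsep => ?_⟩, ?_⟩
  · rw [ht, List.getD_append_right _ _ _ _ le_rfl, Nat.sub_self]
    exact hfin c (by simp [hp])
  · obtain ⟨h1, ⟨d, hdU, hd⟩, ⟨e, heV, he⟩⟩ := hsep.eq_one_and_neighbours_eq_top ht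
    have hF₁ : F₁ = [] := by
      obtain rfl | ⟨F, f, rfl⟩ := F₁.eq_nil_or_concat
      · rfl
      obtain rfl : d = f := by simpa [U] using hdU.symm
      exact absurd hd (hfin d (by simp [hp]))
    have hF₂ : F₂ = [] := by
      rcases F₂ with _ | ⟨f, F⟩
      · rfl
      obtain rfl : e = f := by simpa [V] using heV.symm
      exact absurd he (hfin e (by simp [hp]))
    subst hF₁ hF₂
    rcases L₂ with _ | ⟨q, L₂⟩
    · simp [V, clustersOf] at heV
    rcases D.eq_nil_or_interior_of_blocks_eq hL with ⟨rfl, hp1⟩ | ⟨j, hj0, hjk, hpj⟩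
    · simp [U, hp1, clustersOf] at hdU
    · exact D.interior_not_sep j hj0 hjk c.1 (by rw [← hpj, hp, List.nil_append, ← h1])
  · rwa [ht, decAt, List.getD_append_right _ _ _ _ le_rfl, List.set_append_right _ _ le_rfl,
      Nat.sub_self]

lemma exists_eq_ofFn_of_fitsSections {ws : List BW} (h : FitsSections ws D.blocks) :
    ∃ ℓ : Fin D.k → BW, ws = [] :: List.ofFn ℓ := by
  obtain ⟨w, ws, hw, hws, rfl⟩ := List.forall₂_cons_right_iff.1 h
  have hlen : ws.length = D.k := by simpa using hws.length_eq
  refine ⟨fun i => ws[i], ?_⟩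
  rw [eq_nil_of_mem_Zcl_nil hw, List.ofFn_congr hlen.symm]
  simp

lemma decompOf_iff {a : BW} {ℓ : Fin D.k → BW} :
    decompOf D a ℓ ↔ FitsSections ([] :: List.ofFn ℓ) D.blocks ∧
      a = assembleBlocks ([] :: List.ofFn ℓ) D.blocks := by
  simp [decompOf, blocks, List.forall₂_ofFn_iff, Zt, nil_mem_Zcl, assemble, assembleBlocks_cons,
    assembleBlocks_ofFn]

end SectionData

theorem decomposition_exists_unique_general (t : Template)
    (D : SectionData t) (a : BW) (ha : a ∈ Zt t) (haJ : a ∉ Jt t) :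
    ∃! ℓ : Fin D.k → BW, decompOf D a ℓ := by
  replace haJ : a ∉ Jblocks D.blocks := fun h => haJ (D.Jblocks_subset_Jt h)
  rw [Zt, ← D.clustersOf_blocks] at ha
  obtain ⟨ws, hws, rfl⟩ :=
    (exists_assembleBlocks_or_mem_Jblocks D.blocks_flange_ne_top ha).resolve_right haJ
  obtain ⟨ℓ, rfl⟩ := D.exists_eq_ofFn_of_fitsSections hws
  refine ⟨ℓ, D.decompOf_iff.2 ⟨hws, rfl⟩, fun ℓ' hℓ' => ?_⟩
  obtain ⟨hws', heq⟩ := D.decompOf_iff.1 hℓ'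
  have hsame :=
    eq_or_mem_Jblocks_of_assembleBlocks_eq D.sectionsSeparated_blocks hws' hws heq.symm
  exact List.ofFn_injective (List.cons_injective (hsame.resolve_right (heq ▸ haJ)))

/-- Lemma 3.10 (1) of the paper.  Let `t` be a semifinite template
with zigzag flange `(a₀, …, a_k)` and sections `t₁, …, t_k`.  Every
`λ ∈ Z(t) ∖ J(t)` admits a unique decomposition
`bw(λ) = a₀ ⊔ bw(λ^{(1)}) ⊔ a₁ ⊔ ⋯ ⊔ bw(λ^{(k)}) ⊔ a_k` with `λ^{(i)} ∈ Z(tᵢ)`. -/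
theorem decomposition_exists_unique (t : Template) (hsf : ¬t.IsFiniteTemplate)
    (D : SectionData t) (a : BW) (ha : a ∈ Zt t) (haJ : a ∉ Jt t) :
    ∃! ℓ : Fin D.k → BW, decompOf D a ℓ :=
  decomposition_exists_unique_general t D a ha haJ

end Zigzag
end

section
/- Let w be a finitary oriented paintbox with intervals ((ε₁,w₁), …, (ε_m,w_m)) and define φ_w(λ) = F_λ(w) for every zigzag λ. Then φ_w(λ) > 0 if and only if λ ∈ Z(t_w); that is, the support of φ_w equals Z(t_w). -/
/-!
Common definitions: the zigzag graph on binary words, templates and their coideals,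
zigzag flanges and sections, the functions `F_λ(u)` and `φ_{t,w}`, and harmonic /
semifinite / indecomposable functions on subgraphs of the zigzag graph.
-/

open scoped ENNReal NNReal

namespace Zigzag

/-- The template `t_w` of a finitary oriented paintbox: replace each interval by an
infinite cluster of its sign and insert a one-symbol cluster of the opposite sign
between any two adjacent infinite clusters of equal sign. -/
def tuClusters : List (Bool × ℝ) → List (Bool × ℕ∞)
  | [] => []
  | [(s, _)] => [(s, ⊤)]
  | (s, _) :: (s', x) :: rest =>
      if s = s' then (s, ⊤) :: (!s, 1) :: tuClusters ((s', x) :: rest)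
      else (s, ⊤) :: tuClusters ((s', x) :: rest)

/-!
Cutting a zigzag into consecutive rows and columns with signs `s₁, …, s_m` writes its binary word
as `s₁^{k₁} x₁ s₂^{k₂} x₂ ⋯`: each nonempty piece contributes a run of its own sign and the letters
`xᵢ` joining consecutive pieces are arbitrary. As all weights are positive, `F_λ(w) > 0` exactly
when such a cut exists. These words are exactly the subwords of the words
`t_w[N] = s₁^N σ₁ s₂^N σ₂ ⋯ s_m^N`, where `σᵢ` is the sign opposite to `sᵢ` if `sᵢ = sᵢ₊₁` and
is empty otherwise: a joining letter is absorbed by the run before it or by the run after it,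
unless it is opposite to both, and then it is the separator.
-/

open scoped List

def separator (s : Bool) : List Bool → BW
  | [] => []
  | s' :: _ => if s = s' then [!s] else []

lemma separator_sublist (s : Bool) (r : List Bool) : separator s r <+ [!s] := by
  cases r with
  | nil => exact List.nil_sublist _
  | cons s' r => by_cases h : s = s' <;> simp [separator, h]

def signWord : List Bool → ℕ → BW
  | [], _ => []
  | s :: r, N => List.replicate N s ++ (separator s r ++ signWord r N)

lemma clWord_tuClusters (w : List (Bool × ℝ)) (N : ℕ) :
    clWord (tuClusters w) N = signWord (w.map Prod.fst) N := by
  fun_induction tuClusters w <;> simp_all [clWord, signWord, separator]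

lemma signWord_mono (ss : List Bool) {N M : ℕ} (h : N ≤ M) :
    signWord ss N <+ signWord ss M := by
  induction ss with
  | nil => exact .slnil
  | cons s r ih =>
      exact ((List.replicate_sublist_replicate s).2 h).append ((List.Sublist.refl _).append ih)

lemma cons_sublist_signWord_succ (s : Bool) (r : List Bool) (N : ℕ) :
    s :: signWord (s :: r) N <+ signWord (s :: r) (N + 1) := by
  simp only [signWord, List.replicate_succ, List.cons_append]
  exact ((List.Sublist.refl _).append ((List.Sublist.refl _).append
    (signWord_mono r N.le_succ))).cons_cons s

lemma cons_sublist_separator_append (x s : Bool) {r : List Bool} (hr : r ≠ []) (N : ℕ) :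
    x :: signWord r N <+ s :: (separator s r ++ signWord r (N + 1)) := by
  obtain ⟨s', r, rfl⟩ := List.exists_cons_of_ne_nil hr
  have hmono := signWord_mono (s' :: r) N.le_succ
  by_cases hxs : x = s
  · subst hxs
    exact (hmono.trans (List.sublist_append_right _ _)).cons_cons x
  by_cases hxs' : x = s'
  · subst hxs'
    exact ((cons_sublist_signWord_succ x r N).trans (List.sublist_append_right _ _)).cons s
  · obtain rfl : x = !s := Bool.eq_not.2 hxs
    obtain rfl : s = s' := Bool.not_inj (Bool.eq_not.2 hxs')
    simpa [separator] using (hmono.cons_cons (!s)).cons s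

/-- `a` is the binary word of a zigzag cut into consecutive pieces, a row for each sign `true` and
a column for each sign `false` of `ss`, in this order. -/
inductive Decomposable : List Bool → BW → Prop
  | last (s : Bool) (ss : List Bool) (k : ℕ) : Decomposable (s :: ss) (List.replicate k s)
  | skip {ss : List Bool} {a : BW} (s : Bool) : Decomposable ss a → Decomposable (s :: ss) a
  | cut {ss : List Bool} {a : BW} (s : Bool) (k : ℕ) (x : Bool) :
      Decomposable ss a → Decomposable (s :: ss) (List.replicate k s ++ x :: a)

namespace Decomposable

lemma ne_nil {ss : List Bool} {a : BW} (h : Decomposable ss a) : ss ≠ [] := by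
  cases h <;> simp

lemma replicate_append {ss : List Bool} {a : BW} (h : Decomposable ss a) (s : Bool) (k : ℕ) :
    Decomposable (s :: ss) (List.replicate k s ++ a) := by
  cases k with
  | zero => exact h.skip s
  | succ k =>
      rw [List.replicate_succ', List.append_assoc, List.singleton_append]
      exact h.cut s k s

lemma exists_sublist_signWord {ss : List Bool} {a : BW} (h : Decomposable ss a) :
    ∃ N, a <+ signWord ss N := by
  induction h with
  | last s ss k => exact ⟨k, List.sublist_append_left _ _⟩
  | skip s _ ih =>
      obtain ⟨N, hN⟩ := ih
      exact ⟨N, hN.trans <|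
        (List.sublist_append_right _ _).trans (List.sublist_append_right _ _)⟩
  | @cut ss a s k x h ih =>
      obtain ⟨N, hN⟩ := ih
      refine ⟨max (k + 1) (N + 1), ?_⟩
      calc List.replicate k s ++ x :: a
          _ <+ List.replicate k s ++ s :: (separator s ss ++ signWord ss (N + 1)) :=
            ((hN.cons_cons x).trans (cons_sublist_separator_append x s h.ne_nil N)).append_left _
          _ = List.replicate (k + 1) s ++ (separator s ss ++ signWord ss (N + 1)) := by
            rw [List.replicate_succ', List.append_assoc, List.singleton_append]
          _ <+ signWord (s :: ss) (max (k + 1) (N + 1)) :=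
            ((List.replicate_sublist_replicate s).2 (le_max_left _ _)).append
              ((List.Sublist.refl _).append (signWord_mono ss (le_max_right _ _)))

end Decomposable

lemma decomposable_of_sublist_signWord {ss : List Bool} (hss : ss ≠ []) {a : BW} {N : ℕ}
    (ha : a <+ signWord ss N) : Decomposable ss a := by
  induction ss generalizing a with
  | nil => exact absurd rfl hss
  | cons s r ih =>
      obtain ⟨_, _, rfl, h₁, h₂⟩ := List.sublist_append_iff.1 ha
      obtain ⟨k, -, rfl⟩ := List.sublist_replicate_iff.1 h₁
      obtain ⟨b₁, b₂, rfl, hb₁, hb₂⟩ := List.sublist_append_iff.1 h₂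
      cases r with
      | nil =>
          simp only [separator, signWord, List.sublist_nil] at hb₁ hb₂
          subst hb₁ hb₂
          simpa using Decomposable.last s [] k
      | cons s' r =>
          have hb₂ : Decomposable (s' :: r) b₂ := ih (List.cons_ne_nil _ _) hb₂
          rcases List.sublist_singleton.1 (hb₁.trans (separator_sublist s _)) with rfl | rfl
          · simpa using hb₂.replicate_append s k
          · simpa using hb₂.cut s k (!s)

lemma decomposable_iff_exists_sublist_signWord {ss : List Bool} (hss : ss ≠ []) (a : BW) :
    Decomposable ss a ↔ ∃ N, a <+ signWord ss N :=
  ⟨Decomposable.exists_sublist_signWord, fun ⟨_, ha⟩ => decomposable_of_sublist_signWord hss ha⟩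

/-- The filter condition of `Fword`: the pieces of `c i` boxes are rows or columns as prescribed
by the signs of `u`. -/
def SplitFits (u : List (Bool × ℝ)) (a : BW) (c : Fin u.length → ℕ) : Prop :=
  ∀ i : Fin u.length,
    (a.drop (∑ i' ∈ Finset.univ.filter (· < i), c i')).take (c i - 1)
      = List.replicate (c i - 1) (u.get i).1

lemma sum_filter_lt_succ {M : Type*} [AddCommMonoid M] {m : ℕ} (c : Fin (m + 1) → M)
    (j : Fin m) :
    ∑ i ∈ Finset.univ.filter (· < j.succ), c i
      = c 0 + ∑ i ∈ Finset.univ.filter (· < j), c i.succ := by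
  simp [Finset.sum_filter, Fin.sum_univ_succ]

lemma splitFits_cons_iff (p : Bool × ℝ) (u : List (Bool × ℝ)) (a : BW)
    (c : Fin (u.length + 1) → ℕ) :
    SplitFits (p :: u) a c ↔
      a.take (c 0 - 1) = List.replicate (c 0 - 1) p.1 ∧
        SplitFits u (a.drop (c 0)) (Fin.tail c) := by
  simp [SplitFits, Fin.forall_fin_succ, sum_filter_lt_succ, Fin.tail]

lemma splitFits_nil_zero (u : List (Bool × ℝ)) : SplitFits u [] 0 := by
  simp [SplitFits]

lemma decomposable_of_splitFits {u : List (Bool × ℝ)} {a : BW} {c : Fin u.length → ℕ}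
    (hsum : ∑ i, c i = a.length + 1) (hc : SplitFits u a c) :
    Decomposable (u.map Prod.fst) a := by
  induction u generalizing a with
  | nil => simp at hsum
  | cons p u ih =>
      rw [splitFits_cons_iff] at hc
      obtain ⟨hhead, htail⟩ := hc
      replace hsum : c 0 + ∑ i, Fin.tail c i = a.length + 1 :=
        (Fin.sum_univ_succ c).symm.trans hsum
      rcases hc0 : c 0 with _ | k <;> rw [hc0] at hhead htail hsum
      · rw [List.drop_zero] at htail
        exact (ih (by simpa [Fin.tail] using hsum) htail).skip p.1
      rw [Nat.add_sub_cancel] at hhead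
      by_cases hk : k < a.length
      · have ha : a = List.replicate k p.1 ++ a[k] :: a.drop (k + 1) := by
          rw [← hhead, ← List.drop_eq_getElem_cons hk, List.take_append_drop]
        rw [ha]
        refine (ih ?_ htail).cut p.1 k a[k]
        simp only [Fin.tail, List.length_drop] at hsum ⊢
        omega
      · rw [List.take_of_length_le (by omega)] at hhead
        rw [hhead]
        exact .last _ _ _

lemma exists_splitFits_of_decomposable {u : List (Bool × ℝ)} {a : BW}
    (h : Decomposable (u.map Prod.fst) a) :
    ∃ c : Fin u.length → ℕ, ∑ i, c i = a.length + 1 ∧ SplitFits u a c := by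
  induction u generalizing a with
  | nil => exact absurd rfl h.ne_nil
  | cons p u ih =>
      suffices ∃ k, ∃ d : Fin u.length → ℕ, k + ∑ i, d i = a.length + 1 ∧
          a.take (k - 1) = List.replicate (k - 1) p.1 ∧ SplitFits u (a.drop k) d by
        obtain ⟨k, d, hsum, hhead, htail⟩ := this
        exact ⟨Fin.cons k d, by simpa [Fin.sum_univ_succ] using hsum,
          (splitFits_cons_iff _ _ _ _).2 ⟨hhead, htail⟩⟩
      cases h with
      | last s ss k => exact ⟨k + 1, 0, by simp, by simp, by simpa using splitFits_nil_zero u⟩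
      | skip s h =>
          obtain ⟨d, hsum, hd⟩ := ih h
          exact ⟨0, d, by simpa using hsum, by simp, hd⟩
      | @cut _ a s k x h =>
          obtain ⟨d, hsum, hd⟩ := ih h
          refine ⟨k + 1, d, ?_, by simp, by simpa [List.drop_append] using hd⟩
          simp only [hsum, List.length_append, List.length_replicate, List.length_cons]
          omega

lemma exists_splitFits_iff_decomposable (u : List (Bool × ℝ)) (a : BW) :
    (∃ c : Fin u.length → ℕ, ∑ i, c i = a.length + 1 ∧ SplitFits u a c) ↔
      Decomposable (u.map Prod.fst) a :=
  ⟨fun ⟨_, hsum, hc⟩ => decomposable_of_splitFits hsum hc, exists_splitFits_of_decomposable⟩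

lemma Fword_pos_iff {u : List (Bool × ℝ)} (hu : ∀ p ∈ u, 0 < p.2) (a : BW) :
    0 < Fword u a ↔ ∃ c : Fin u.length → ℕ, ∑ i, c i = a.length + 1 ∧ SplitFits u a c := by
  have hprod (c : Fin u.length → ℕ) : 0 < ∏ i, (u.get i).2 ^ c i :=
    Finset.prod_pos fun i _ => pow_pos (hu _ (List.get_mem u i)) _
  rw [Fword, Finset.sum_pos_iff_of_nonneg fun c _ => (hprod c).le]
  simp only [Finset.mem_filter, Finset.Nat.mem_antidiagonalTuple, hprod, and_true, SplitFits]

/-- Proposition 3.5 of the paper.  Let `w` be a finitary oriented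
paintbox (oriented intervals with positive lengths summing to `1`) and
`φ_w(λ) = F_λ(w)`.  Then `φ_w(λ) > 0` if and only if `λ ∈ Z(t_w)`: the support of
`φ_w` is exactly `Z(t_w)`. -/
theorem support_of_paintbox_function (w : List (Bool × ℝ))
    (hwpos : ∀ p ∈ w, 0 < p.2) (hwsum : (w.map Prod.snd).sum = 1) (a : BW) :
    0 < Fword w a ↔ a ∈ Zcl (tuClusters w) := by
  have hw : w.map Prod.fst ≠ [] := by
    intro h
    simp [List.map_eq_nil_iff.1 h] at hwsum
  rw [Fword_pos_iff hwpos, exists_splitFits_iff_decomposable,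
    decomposable_iff_exists_sublist_signWord hw]
  simp only [Zcl, Set.mem_ofPred_eq, clWord_tuClusters]

end Zigzag
end

section
/- Let Γ be a graded graph. A saturated coideal J of Γ is primitive if and only if for any two vertices λ₁, λ₂ ∈ J there exists a vertex μ ∈ J with μ ≥ λ₁ and μ ≥ λ₂. -/
/-!
Common definitions: graded graphs, ideals and coideals, harmonic functions and the
cone `K⁺`, finite / semifinite / indecomposable harmonic functions.
-/

open scoped ENNReal NNReal

namespace Zigzag

/-- A graded graph: vertices partitioned into finite levels, oriented edges going up
one level, every vertex having at least one outgoing edge. -/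
structure GradedGraph where
  V : Type
  rank : V → ℕ
  adj : V → V → Prop
  rank_adj : ∀ ⦃x y⦄, adj x y → rank y = rank x + 1
  finLevels : ∀ n : ℕ, {x : V | rank x = n}.Finite
  outEdge : ∀ x : V, ∃ y, adj x y

namespace GradedGraph

variable (G : GradedGraph)

/-- `x ≤ y`: `y` is reachable from `x` by a directed path (possibly trivial). -/
def le (x y : G.V) : Prop := Relation.ReflTransGen G.adj x y

/-- The finset of upper neighbours of a vertex. -/
noncomputable def upFinset (x : G.V) : Finset G.V :=
  ((G.finLevels (G.rank x + 1)).subset fun _ hy => G.rank_adj hy).toFinset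

/-- A coideal: closed under going down. -/
def IsCoideal (J : Set G.V) : Prop := ∀ a ∈ J, ∀ b, G.le b a → b ∈ J

/-- A saturated coideal: a coideal in which every vertex has an upper neighbour. -/
def IsSatCoideal (J : Set G.V) : Prop :=
  G.IsCoideal J ∧ ∀ a ∈ J, ∃ b ∈ J, G.adj a b

/-- A primitive saturated coideal: a saturated coideal which is not the union of two
strictly smaller saturated coideals. -/
def IsPrimCoideal (J : Set G.V) : Prop :=
  G.IsSatCoideal J ∧ ∀ J₁ J₂ : Set G.V, G.IsSatCoideal J₁ → G.IsSatCoideal J₂ →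
    J = J₁ ∪ J₂ → J = J₁ ∨ J = J₂

/-- An ideal: closed under going up. -/
def IsIdeal (I : Set G.V) : Prop := ∀ a ∈ I, ∀ b, G.le a b → b ∈ I

/-- A `[0,∞]`-valued function on the vertices is harmonic if its value at any vertex
equals the sum of its values at the upper neighbours. -/
def Harmonic (φ : G.V → ℝ≥0∞) : Prop := ∀ x, φ x = ∑ y ∈ G.upFinset x, φ y

/-- The relation `λ = ∑_{μ : λ ↗ μ} μ` as an element of the free module. -/
noncomputable def relOf (x : G.V) : G.V →₀ ℝ :=
  Finsupp.single x 1 - ∑ y ∈ G.upFinset x, Finsupp.single y 1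

/-- The submodule of relations defining `K(Γ)`. -/
noncomputable def Krel : Submodule ℝ (G.V →₀ ℝ) :=
  Submodule.span ℝ (Set.range G.relOf)

/-- The class of `f` in `K(Γ)`. -/
noncomputable def kmk (f : G.V →₀ ℝ) : (G.V →₀ ℝ) ⧸ G.Krel :=
  Submodule.Quotient.mk f

/-- The cone `K⁺(Γ)` spanned by the vertices in `K(Γ)`. -/
noncomputable def Kpos : Set ((G.V →₀ ℝ) ⧸ G.Krel) :=
  G.kmk '' {f | ∀ x, 0 ≤ f x}

/-- The order defined by the cone: `x ≤_K y` iff `y − x ∈ K⁺(Γ)`. -/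
def leK (x y : (G.V →₀ ℝ) ⧸ G.Krel) : Prop := y - x ∈ G.Kpos

/-- The value of (the canonical extension of) `φ` at a nonnegative combination of
vertices. -/
noncomputable def phiHat (φ : G.V → ℝ≥0∞) (f : G.V →₀ ℝ) : ℝ≥0∞ :=
  ∑ x ∈ f.support, ENNReal.ofReal (f x) * φ x

/-- `φ` is everywhere finite. -/
def FiniteH (φ : G.V → ℝ≥0∞) : Prop := ∀ x, φ x ≠ ⊤

/-- `φ` is semifinite: not everywhere finite, and its value at any element of the cone
`K⁺(Γ)` is the supremum of its values at the `≤_K`-smaller elements of the cone where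
it is finite. -/
def Semifinite (φ : G.V → ℝ≥0∞) : Prop :=
  (∃ x, φ x = ⊤) ∧
  ∀ f : G.V →₀ ℝ, (∀ x, 0 ≤ f x) →
    G.phiHat φ f =
      ⨆ g ∈ {g : G.V →₀ ℝ |
        (∀ x, 0 ≤ g x) ∧ G.leK (G.kmk g) (G.kmk f) ∧ G.phiHat φ g ≠ ⊤},
        G.phiHat φ g

/-- A semifinite harmonic function `φ` is indecomposable if any finite or semifinite
harmonic function `φ′ ≤ φ` which does not vanish identically on the finiteness ideal
of `φ` is a constant multiple of `φ` on that ideal. -/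
def IndecSemifinite (φ : G.V → ℝ≥0∞) : Prop :=
  ∀ φ' : G.V → ℝ≥0∞, G.Harmonic φ' →
    (G.FiniteH φ' ∨ G.Semifinite φ') →
    (∀ x, φ' x ≤ φ x) →
    (∃ x, φ x ≠ ⊤ ∧ φ' x ≠ 0) →
    ∃ c : ℝ≥0, ∀ x, φ x ≠ ⊤ → φ' x = (c : ℝ≥0∞) * φ x

/-- A finite harmonic function `φ` is indecomposable if any harmonic function
`φ′ ≤ φ` which is not identically zero is a constant multiple of `φ`. -/
def IndecFinite (φ : G.V → ℝ≥0∞) : Prop :=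
  ∀ φ' : G.V → ℝ≥0∞, G.Harmonic φ' →
    (∀ x, φ' x ≤ φ x) → (∃ x, φ' x ≠ 0) →
    ∃ c : ℝ≥0, ∀ x, φ' x = (c : ℝ≥0∞) * φ x

/-- The number of directed paths from `x` to `y` (the shifted dimension
`dim(x, y)`). -/
noncomputable def gdim (x y : G.V) : ℕ :=
  Nat.card {p : List G.V // p.Chain' G.adj ∧ p.head? = some x ∧ p.getLast? = some y}

end GradedGraph

end Zigzag

/-!
If `J` is directed, a decomposition `J = J₁ ∪ J₂` into proper coideals fails at a common
upper bound of a vertex outside `J₁` and a vertex outside `J₂`. Conversely, for `a ∈ J`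
the part `D` of `J` below the vertices of `J` above `a`, and the part of `J` below `J \ D`,
are saturated coideals covering `J`; primitivity forces `J = D`, since the second one
cannot contain `a`.
-/

namespace Zigzag

namespace GradedGraph

variable {G : GradedGraph} {J S D : Set G.V}

variable (G) in
def downClosure (S : Set G.V) : Set G.V := {x | ∃ s ∈ S, G.le x s}

lemma subset_downClosure : S ⊆ G.downClosure S :=
  fun s hs => ⟨s, hs, .refl⟩

lemma isCoideal_downClosure : G.IsCoideal (G.downClosure S) :=
  fun _ ⟨s, hs, has⟩ _ hba => ⟨s, hs, hba.trans has⟩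

lemma IsCoideal.downClosure_subset (hJ : G.IsCoideal J) (hSJ : S ⊆ J) :
    G.downClosure S ⊆ J :=
  fun _ ⟨s, hs, hxs⟩ => hJ s (hSJ hs) _ hxs

lemma IsCoideal.eq_union_downClosure_diff (hJ : G.IsCoideal J) (hDJ : D ⊆ J) :
    J = D ∪ G.downClosure (J \ D) := by
  refine subset_antisymm (fun x hx => ?_)
    (Set.union_subset hDJ (hJ.downClosure_subset Set.sdiff_subset))
  by_cases hxD : x ∈ D
  · exact .inl hxD
  · exact .inr (subset_downClosure ⟨hx, hxD⟩)

lemma IsSatCoideal.isSatCoideal_downClosure (hJ : G.IsSatCoideal J) (hSJ : S ⊆ J)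
    (hS : ∀ s ∈ S, ∀ t ∈ J, G.adj s t → t ∈ S) : G.IsSatCoideal (G.downClosure S) := by
  refine ⟨isCoideal_downClosure, fun x ⟨s, hs, hxs⟩ => ?_⟩
  rcases hxs.cases_head with rfl | ⟨y, hxy, hys⟩
  · obtain ⟨t, htJ, hxt⟩ := hJ.2 x (hSJ hs)
    exact ⟨t, subset_downClosure (hS x hs t htJ hxt), hxt⟩
  · exact ⟨y, ⟨s, hs, hys⟩, hxy⟩

lemma IsPrimCoideal.directedOn (hJ : G.IsPrimCoideal J) : DirectedOn G.le J := by
  intro a ha b hb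
  set U := {c ∈ J | G.le a c}
  have hUJ : U ⊆ J := Set.sep_subset _ _
  have hD : G.IsSatCoideal (G.downClosure U) :=
    hJ.1.isSatCoideal_downClosure hUJ
      fun s hs t ht hst => ⟨ht, hs.2.tail hst⟩
  have hE : G.IsSatCoideal (G.downClosure (J \ G.downClosure U)) :=
    hJ.1.isSatCoideal_downClosure Set.sdiff_subset
      fun s hs t ht hst => ⟨ht, fun htD => hs.2 (isCoideal_downClosure t htD s (.single hst))⟩
  have hcover := hJ.1.1.eq_union_downClosure_diff (hJ.1.1.downClosure_subset hUJ)
  rcases hJ.2 _ _ hD hE hcover with hJD | hJE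
  · obtain ⟨c, ⟨hcJ, hac⟩, hbc⟩ : b ∈ G.downClosure U := hJD ▸ hb
    exact ⟨c, hcJ, hac, hbc⟩
  · obtain ⟨x, ⟨hxJ, hxD⟩, hax⟩ : a ∈ G.downClosure (J \ G.downClosure U) := hJE ▸ ha
    exact (hxD (subset_downClosure (show x ∈ U from ⟨hxJ, hax⟩))).elim

lemma IsSatCoideal.isPrimCoideal_of_directedOn (hJ : G.IsSatCoideal J)
    (hdir : DirectedOn G.le J) : G.IsPrimCoideal J := by
  refine ⟨hJ, fun J₁ J₂ h₁ h₂ hJ₁₂ => ?_⟩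
  by_contra! hne
  obtain ⟨a, haJ, ha₁⟩ :=
    Set.exists_of_ssubset ((hJ₁₂ ▸ Set.subset_union_left).ssubset_of_ne hne.1.symm)
  obtain ⟨b, hbJ, hb₂⟩ :=
    Set.exists_of_ssubset ((hJ₁₂ ▸ Set.subset_union_right).ssubset_of_ne hne.2.symm)
  obtain ⟨c, hcJ, hac, hbc⟩ := hdir a haJ b hbJ
  rcases (hJ₁₂ ▸ hcJ : c ∈ J₁ ∪ J₂) with hc | hc
  · exact ha₁ (h₁.1 c hc a hac)
  · exact hb₂ (h₂.1 c hc b hbc)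

end GradedGraph

/-- A saturated coideal `J` of a graded graph `Γ` is primitive if
and only if any two vertices of `J` admit a common upper bound in `J`. -/
theorem saturated_coideal_primitive_iff (G : GradedGraph) (J : Set G.V)
    (hJ : G.IsSatCoideal J) :
    G.IsPrimCoideal J ↔
      ∀ a ∈ J, ∀ b ∈ J, ∃ c ∈ J, G.le a c ∧ G.le b c :=
  ⟨GradedGraph.IsPrimCoideal.directedOn, hJ.isPrimCoideal_of_directedOn⟩

end Zigzag
end
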